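/- Let U ⊆ ℂ be open and connected, u : U → ℝ smooth, and suppose (ψ₁, ψ₂) : U → ℂ² is a nowhere-vanishing solution of the Dirac system ∂ψ₁/∂z̄ = u ψ₂, ∂ψ₂/∂z = −u ψ₁. Then the ℝ³-valued 1-form ω with complex components ω = Re[(ψ̄₂² − ψ₁²) dz], Im[(ψ̄₂² + ψ₁²) dz], 2 Re[ψ̄₂ ψ₁ dz] (the classical Weierstrass-type form) is closed: dω = 0. -/

import Mathlib

open Complex

/-- The Wirtinger operator ∂/∂z̄ = ½(∂/∂x + i ∂/∂y) of a map ℂ → ℂ, viewed as a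
real-differentiable map. -/
noncomputable def dzbar (f : ℂ → ℂ) (z : ℂ) : ℂ :=
  (1 / 2 : ℂ) * (fderiv ℝ f z 1 + Complex.I * fderiv ℝ f z Complex.I)

/-- The Wirtinger operator ∂/∂z = ½(∂/∂x − i ∂/∂y). -/
noncomputable def dz (f : ℂ → ℂ) (z : ℂ) : ℂ :=
  (1 / 2 : ℂ) * (fderiv ℝ f z 1 - Complex.I * fderiv ℝ f z Complex.I)

/-! By the Leibniz rule and `∂̄ f̄ = conj (∂f)`, the Dirac system gives
`∂̄(ψ̄₂²) = -2u conj(ψ₁ψ₂)`, `∂̄(ψ₁²) = 2u ψ₁ψ₂` and `∂̄(2ψ̄₂ψ₁) = 2u(|ψ₂|² - |ψ₁|²)`.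
Since `u` is real, `∂̄` of the three coefficient functions is real, purely imaginary and real
respectively, which is closedness of the three real 1-forms. -/

open ComplexConjugate

section Wirtinger

variable {f g : ℂ → ℂ} {z : ℂ}

lemma DifferentiableAt.conj (hf : DifferentiableAt ℝ f z) :
    DifferentiableAt ℝ (fun w => conj (f w)) z :=
  conjCLE.differentiableAt.comp z hf

lemma dzbar_add (hf : DifferentiableAt ℝ f z) (hg : DifferentiableAt ℝ g z) :
    dzbar (fun w => f w + g w) z = dzbar f z + dzbar g z := by
  simp only [dzbar, fderiv_fun_add hf hg, add_apply]
  ring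

lemma dzbar_sub (hf : DifferentiableAt ℝ f z) (hg : DifferentiableAt ℝ g z) :
    dzbar (fun w => f w - g w) z = dzbar f z - dzbar g z := by
  simp only [dzbar, fderiv_fun_sub hf hg, sub_apply]
  ring

lemma dzbar_mul (hf : DifferentiableAt ℝ f z) (hg : DifferentiableAt ℝ g z) :
    dzbar (fun w => f w * g w) z = dzbar f z * g z + f z * dzbar g z := by
  simp only [dzbar, fderiv_fun_mul hf hg, add_apply, smul_apply, smul_eq_mul]
  ring

lemma dzbar_const_mul (c : ℂ) (hf : DifferentiableAt ℝ f z) :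
    dzbar (fun w => c * f w) z = c * dzbar f z := by
  simp only [dzbar, fderiv_const_mul hf, smul_apply, smul_eq_mul]
  ring

lemma dzbar_sq (hf : DifferentiableAt ℝ f z) :
    dzbar (fun w => f w ^ 2) z = 2 * f z * dzbar f z := by
  simp only [pow_two, dzbar_mul hf hf]
  ring

lemma dzbar_conj (hf : DifferentiableAt ℝ f z) :
    dzbar (fun w => conj (f w)) z = conj (dz f z) := by
  have h : fderiv ℝ (fun w => conj (f w)) z = (conjCLE : ℂ →L[ℝ] ℂ).comp (fderiv ℝ f z) :=
    (conjCLE.toContinuousLinearMap.hasFDerivAt.comp z hf.hasFDerivAt).fderiv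
  simp only [dzbar, dz, h, ContinuousLinearMap.coe_comp, Function.comp_apply,
    ContinuousLinearEquiv.coe_coe, conjCLE_apply, map_mul, map_sub, conj_I, map_div₀,
    map_one, map_ofNat]
  ring

end Wirtinger

section Dirac

variable {ψ₁ ψ₂ : ℂ → ℂ} {u : ℝ} {z : ℂ}

lemma dzbar_conj_sq_of_dirac (h₂ : DifferentiableAt ℝ ψ₂ z)
    (hdirac₂ : dz ψ₂ z = -(u : ℂ) * ψ₁ z) :
    dzbar (fun w => conj (ψ₂ w) ^ 2) z = -2 * u * conj (ψ₁ z * ψ₂ z) := by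
  rw [dzbar_sq h₂.conj, dzbar_conj h₂, hdirac₂]
  simp only [map_mul, map_neg, conj_ofReal]
  ring

lemma dzbar_sq_of_dirac (h₁ : DifferentiableAt ℝ ψ₁ z)
    (hdirac₁ : dzbar ψ₁ z = u * ψ₂ z) :
    dzbar (fun w => ψ₁ w ^ 2) z = 2 * u * (ψ₁ z * ψ₂ z) := by
  rw [dzbar_sq h₁, hdirac₁]
  ring

lemma dzbar_conj_sq_sub_sq_of_dirac (h₁ : DifferentiableAt ℝ ψ₁ z) (h₂ : DifferentiableAt ℝ ψ₂ z)
    (hdirac₁ : dzbar ψ₁ z = u * ψ₂ z) (hdirac₂ : dz ψ₂ z = -(u : ℂ) * ψ₁ z) :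
    dzbar (fun w => conj (ψ₂ w) ^ 2 - ψ₁ w ^ 2) z = (-4 * u * (ψ₁ z * ψ₂ z).re : ℝ) := by
  rw [dzbar_sub (h₂.conj.fun_pow 2) (h₁.fun_pow 2), dzbar_conj_sq_of_dirac h₂ hdirac₂,
    dzbar_sq_of_dirac h₁ hdirac₁]
  apply ext <;> simp <;> ring

lemma dzbar_conj_sq_add_sq_of_dirac (h₁ : DifferentiableAt ℝ ψ₁ z) (h₂ : DifferentiableAt ℝ ψ₂ z)
    (hdirac₁ : dzbar ψ₁ z = u * ψ₂ z) (hdirac₂ : dz ψ₂ z = -(u : ℂ) * ψ₁ z) :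
    dzbar (fun w => conj (ψ₂ w) ^ 2 + ψ₁ w ^ 2) z = (4 * u * (ψ₁ z * ψ₂ z).im : ℝ) * I := by
  rw [dzbar_add (h₂.conj.fun_pow 2) (h₁.fun_pow 2), dzbar_conj_sq_of_dirac h₂ hdirac₂,
    dzbar_sq_of_dirac h₁ hdirac₁]
  apply ext
  · simp
  · simp; ring

lemma dzbar_two_conj_mul_of_dirac (h₁ : DifferentiableAt ℝ ψ₁ z) (h₂ : DifferentiableAt ℝ ψ₂ z)
    (hdirac₁ : dzbar ψ₁ z = u * ψ₂ z) (hdirac₂ : dz ψ₂ z = -(u : ℂ) * ψ₁ z) :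
    dzbar (fun w => 2 * conj (ψ₂ w) * ψ₁ w) z =
      (2 * u * (normSq (ψ₂ z) - normSq (ψ₁ z)) : ℝ) := by
  rw [dzbar_mul (h₂.conj.const_mul 2) h₁,
    dzbar_const_mul 2 h₂.conj, dzbar_conj h₂, hdirac₁, hdirac₂]
  apply ext <;> simp [normSq_apply] <;> ring

end Dirac

/- For a complex function `g`, the real 1-form `Re (g dz)` is closed iff `Im (∂̄g) = 0` and
`Im (g dz)` is closed iff `Re (∂̄g) = 0`. -/
theorem stmt19_general (U : Set ℂ) (hU : IsOpen U)
    (u : ℂ → ℝ)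
    (ψ₁ ψ₂ : ℂ → ℂ) (hψ₁ : ContDiffOn ℝ 2 ψ₁ U) (hψ₂ : ContDiffOn ℝ 2 ψ₂ U)
    (hdirac₁ : ∀ z ∈ U, dzbar ψ₁ z = (u z : ℂ) * ψ₂ z)
    (hdirac₂ : ∀ z ∈ U, dz ψ₂ z = -(u z : ℂ) * ψ₁ z) :
    ∀ z ∈ U,
      -- d(Re[(ψ̄₂² − ψ₁²) dz]) = 0 :
      (dzbar (fun w => (starRingEnd ℂ (ψ₂ w)) ^ 2 - (ψ₁ w) ^ 2) z).im = 0 ∧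
      -- d(Im[(ψ̄₂² + ψ₁²) dz]) = 0 :
      (dzbar (fun w => (starRingEnd ℂ (ψ₂ w)) ^ 2 + (ψ₁ w) ^ 2) z).re = 0 ∧
      -- d(2 Re[ψ̄₂ ψ₁ dz]) = 0 :
      (dzbar (fun w => 2 * starRingEnd ℂ (ψ₂ w) * ψ₁ w) z).im = 0 := by
  intro z hz
  have h₁ : DifferentiableAt ℝ ψ₁ z :=
    (hψ₁.contDiffAt (hU.mem_nhds hz)).differentiableAt (by norm_num)
  have h₂ : DifferentiableAt ℝ ψ₂ z :=
    (hψ₂.contDiffAt (hU.mem_nhds hz)).differentiableAt (by norm_num)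
  refine ⟨?_, ?_, ?_⟩
  · rw [dzbar_conj_sq_sub_sq_of_dirac h₁ h₂ (hdirac₁ z hz) (hdirac₂ z hz), ofReal_im]
  · rw [dzbar_conj_sq_add_sq_of_dirac h₁ h₂ (hdirac₁ z hz) (hdirac₂ z hz), re_ofReal_mul, I_re,
      mul_zero]
  · rw [dzbar_two_conj_mul_of_dirac h₁ h₂ (hdirac₁ z hz) (hdirac₂ z hz), ofReal_im]

theorem stmt19 (U : Set ℂ) (hU : IsOpen U) (hUconn : IsConnected U)
    (u : ℂ → ℝ)
    (ψ₁ ψ₂ : ℂ → ℂ) (hψ₁ : ContDiffOn ℝ 2 ψ₁ U) (hψ₂ : ContDiffOn ℝ 2 ψ₂ U)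
    (hvan : ∀ z ∈ U, ψ₁ z ≠ 0 ∨ ψ₂ z ≠ 0)
    (hdirac₁ : ∀ z ∈ U, dzbar ψ₁ z = (u z : ℂ) * ψ₂ z)
    (hdirac₂ : ∀ z ∈ U, dz ψ₂ z = -(u z : ℂ) * ψ₁ z) :
    ∀ z ∈ U,
      -- d(Re[(ψ̄₂² − ψ₁²) dz]) = 0 :
      (dzbar (fun w => (starRingEnd ℂ (ψ₂ w)) ^ 2 - (ψ₁ w) ^ 2) z).im = 0 ∧
      -- d(Im[(ψ̄₂² + ψ₁²) dz]) = 0 :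
      (dzbar (fun w => (starRingEnd ℂ (ψ₂ w)) ^ 2 + (ψ₁ w) ^ 2) z).re = 0 ∧
      -- d(2 Re[ψ̄₂ ψ₁ dz]) = 0 :
      (dzbar (fun w => 2 * starRingEnd ℂ (ψ₂ w) * ψ₁ w) z).im = 0 :=
  stmt19_general U hU u ψ₁ ψ₂ hψ₁ hψ₂ hdirac₁ hdirac₂
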